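/- Let G be a free nilpotent group of class 3 on two generators x, y. Let v = [[y,x],y] ∈ Z(G). Then: (a) ⟨x⟩^G = ⟨xv⟩^G, (b) x has infinite order modulo [G,G], and (c) there is no w ∈ G with [x,w] = v. In particular, G does not have the Magnus property. -/

import Mathlib

def MagnusProperty (G : Type*) [Group G] : Prop :=
  ∀ g h : G, Subgroup.normalClosure {g} = Subgroup.normalClosure {h} →
    IsConj g h ∨ IsConj g h⁻¹

/-- The free nilpotent group of class 3 on two generators:
`F/γ₄(F)` where `F` is the free group on two generators.
(`lowerCentralSeries F 3 = γ₄(F)` in Mathlib's indexing.) -/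
abbrev FreeNilpClass3Rank2 : Type :=
  FreeGroup (Fin 2) ⧸ Subgroup.lowerCentralSeries (⊤ : Subgroup (FreeGroup (Fin 2))) 3

/-!
Write `u = [y, x]`. Since `v = [u, y]` is central, `[y, x v] = u`, so `v = [[y, x v], y]` lies in
the normal closure of `x v` as well as in that of `x`; hence `x` and `x v` have the same normal
closure. Mapping `x ↦ 1 + E₁₂`, `y ↦ 1 + E₂₃ + E₃₄` into the unitriangular `4 × 4` integer
matrices (a group of class 3) sends `[x, w]` to `1 + w₂₃ E₁₃ + w₂₄ E₁₄` and `v` to `1 - E₁₄`.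
On the image, `w₂₄ = w₂₃ (w₂₃ - 1) / 2`, so `[x, w] = v` is impossible: `x` is not conjugate to
`x v`. It is not conjugate to `(x v)⁻¹` either, since in the abelianization this would force
`x² = 1`, while `x` has infinite order there.
-/

open Subgroup
open scoped commutatorElement

section General

variable {G : Type*} [Group G]

theorem QuotientGroup.mk_mem_center_of_mem_lowerCentralSeries {n : ℕ} {g : G}
    (hg : g ∈ (⊤ : Subgroup G).lowerCentralSeries n) :
    (g : G ⧸ (⊤ : Subgroup G).lowerCentralSeries (n + 1)) ∈ center _ := by
  refine mem_center_iff.mpr fun h ↦ ?_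
  induction h using QuotientGroup.induction_on with | H h => ?_
  rw [← QuotientGroup.mk_mul, ← QuotientGroup.mk_mul, QuotientGroup.eq]
  have : (h * g)⁻¹ * (g * h) = ⁅g⁻¹, h⁻¹⁆ := by group
  exact this ▸ commutator_mem_commutator (inv_mem hg) (mem_top _)

theorem commutatorElement_commutatorElement_mem {N : Subgroup G} [N.Normal] {x : G}
    (hx : x ∈ N) (y : G) : ⁅⁅y⁻¹, x⁻¹⁆⁻¹, y⁻¹⁆ ∈ N :=
  commutator_le_left _ ⊤ <| commutator_mem_commutator
    (inv_mem (commutator_le_right ⊤ _ (commutator_mem_commutator (mem_top _) (inv_mem hx))))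
    (mem_top _)

theorem normalClosure_singleton_eq_mul_commutatorElement {x y : G}
    (hv : ⁅⁅y⁻¹, x⁻¹⁆⁻¹, y⁻¹⁆ ∈ center G) :
    normalClosure {x} = normalClosure {x * ⁅⁅y⁻¹, x⁻¹⁆⁻¹, y⁻¹⁆} := by
  set v := ⁅⁅y⁻¹, x⁻¹⁆⁻¹, y⁻¹⁆
  have hxv : ⁅⁅y⁻¹, (x * v)⁻¹⁆⁻¹, y⁻¹⁆ = v := by
    have hu : ⁅y⁻¹, (x * v)⁻¹⁆ = ⁅y⁻¹, x⁻¹⁆ := by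
      rw [mul_inv_rev, commutatorElement_mul_right_eq_mul_conj,
        commutatorElement_eq_one_iff_mul_comm.mpr (mem_center_iff.mp (inv_mem hv) _), one_mul,
        inv_inv, mul_assoc, mem_center_iff.mp hv, inv_mul_cancel_left]
    rw [hu]
  apply le_antisymm <;> refine normalClosure_le_normal (Set.singleton_subset_iff.mpr ?_)
  · have hmem : x * v ∈ normalClosure {x * v} := subset_normalClosure rfl
    have hv' := commutatorElement_commutatorElement_mem hmem y
    rw [hxv] at hv'
    simpa using mul_mem hmem (inv_mem hv')
  · have hmem : x ∈ normalClosure {x} := subset_normalClosure rfl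
    exact mul_mem hmem (commutatorElement_commutatorElement_mem hmem y)

theorem not_magnusProperty_of_normalClosure_eq {x v : G}
    (hncl : normalClosure {x} = normalClosure {x * v}) (hv : v ∈ commutator G)
    (hx : x ^ 2 ∉ commutator G) (hw : ∀ w, x⁻¹ * w⁻¹ * x * w ≠ v) : ¬ MagnusProperty G := by
  intro hG
  rcases hG x (x * v) hncl with hconj | hconj
  · obtain ⟨c, hc⟩ := isConj_iff.mp hconj
    refine hw c⁻¹ ?_
    simp only [inv_inv, mul_assoc] at hc ⊢
    rw [hc, inv_mul_cancel_left]
  · have hab := isConj_iff_eq.mp (Abelianization.of.map_isConj hconj)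
    rw [← Abelianization.ker_of, MonoidHom.mem_ker] at hv hx
    rw [map_inv, map_mul, hv, mul_one] at hab
    exact hx (by rw [map_pow, pow_two, mul_eq_one_iff_eq_inv, ← hab])

theorem lowerCentralSeries_le_ker_of_eq_bot {K : Type*} [Group K] (f : G →* K) {n : ℕ}
    (hK : (⊤ : Subgroup K).lowerCentralSeries n = ⊥) :
    (⊤ : Subgroup G).lowerCentralSeries n ≤ f.ker := by
  intro g hg
  have hfg : f g ∈ (⊤ : Subgroup K).lowerCentralSeries n :=
    lowerCentralSeries_mono n le_top (map_lowerCentralSeries ⊤ f n ▸ mem_map_of_mem f hg)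
  rwa [hK, mem_bot] at hfg

end General

/-- Upper unitriangular `4 × 4` integer matrices, recorded by their entries above the diagonal. -/
@[ext]
structure UT4 where
  e12 : ℤ
  e13 : ℤ
  e14 : ℤ
  e23 : ℤ
  e24 : ℤ
  e34 : ℤ
deriving DecidableEq

namespace UT4

instance : Mul UT4 :=
  ⟨fun m n ↦ ⟨m.e12 + n.e12, m.e13 + n.e13 + m.e12 * n.e23,
    m.e14 + n.e14 + m.e12 * n.e24 + m.e13 * n.e34, m.e23 + n.e23, m.e24 + n.e24 + m.e23 * n.e34,
    m.e34 + n.e34⟩⟩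

instance : One UT4 := ⟨⟨0, 0, 0, 0, 0, 0⟩⟩

instance : Inv UT4 :=
  ⟨fun m ↦ ⟨-m.e12, -m.e13 + m.e12 * m.e23,
    -m.e14 + m.e12 * m.e24 + m.e13 * m.e34 - m.e12 * m.e23 * m.e34, -m.e23,
    -m.e24 + m.e23 * m.e34, -m.e34⟩⟩

section Entries

variable (m n : UT4)

@[simp] lemma mul_e12 : (m * n).e12 = m.e12 + n.e12 := rfl
@[simp] lemma mul_e13 : (m * n).e13 = m.e13 + n.e13 + m.e12 * n.e23 := rfl
@[simp] lemma mul_e14 : (m * n).e14 = m.e14 + n.e14 + m.e12 * n.e24 + m.e13 * n.e34 := rfl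
@[simp] lemma mul_e23 : (m * n).e23 = m.e23 + n.e23 := rfl
@[simp] lemma mul_e24 : (m * n).e24 = m.e24 + n.e24 + m.e23 * n.e34 := rfl
@[simp] lemma mul_e34 : (m * n).e34 = m.e34 + n.e34 := rfl
@[simp] lemma one_e12 : (1 : UT4).e12 = 0 := rfl
@[simp] lemma one_e13 : (1 : UT4).e13 = 0 := rfl
@[simp] lemma one_e14 : (1 : UT4).e14 = 0 := rfl
@[simp] lemma one_e23 : (1 : UT4).e23 = 0 := rfl
@[simp] lemma one_e24 : (1 : UT4).e24 = 0 := rfl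
@[simp] lemma one_e34 : (1 : UT4).e34 = 0 := rfl
@[simp] lemma inv_e12 : m⁻¹.e12 = -m.e12 := rfl
@[simp] lemma inv_e13 : m⁻¹.e13 = -m.e13 + m.e12 * m.e23 := rfl
@[simp] lemma inv_e14 :
    m⁻¹.e14 = -m.e14 + m.e12 * m.e24 + m.e13 * m.e34 - m.e12 * m.e23 * m.e34 := rfl
@[simp] lemma inv_e23 : m⁻¹.e23 = -m.e23 := rfl
@[simp] lemma inv_e24 : m⁻¹.e24 = -m.e24 + m.e23 * m.e34 := rfl
@[simp] lemma inv_e34 : m⁻¹.e34 = -m.e34 := rfl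

end Entries

instance : Group UT4 where
  mul_assoc _ _ _ := by ext <;> simp <;> ring
  one_mul _ := by ext <;> simp
  mul_one _ := by ext <;> simp
  inv_mul_cancel _ := by ext <;> simp; ring

def zeroSuperdiagonal : Subgroup UT4 where
  carrier := {m | m.e12 = 0 ∧ m.e23 = 0 ∧ m.e34 = 0}
  one_mem' := ⟨rfl, rfl, rfl⟩
  mul_mem' := by
    rintro m n ⟨hm12, hm23, hm34⟩ ⟨hn12, hn23, hn34⟩
    simp [hm12, hm23, hm34, hn12, hn23, hn34]
  inv_mem' := by
    rintro m ⟨h12, h23, h34⟩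
    simp [h12, h23, h34]

lemma commutator_le_zeroSuperdiagonal : commutator UT4 ≤ zeroSuperdiagonal := by
  rw [commutator_def, commutator_le]
  intro g _ h _
  refine ⟨?_, ?_, ?_⟩ <;> simp [commutatorElement_def]

lemma lowerCentralSeries_three_eq_bot : (⊤ : Subgroup UT4).lowerCentralSeries 3 = ⊥ := by
  refine Subgroup.lowerCentralSeries_succ_eq_bot _ (commutator_le.mpr fun g hg h _ ↦ ?_)
  obtain ⟨h12, h23, h34⟩ := commutator_le_zeroSuperdiagonal hg
  refine mem_center_iff.mpr fun z ↦ ?_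
  ext <;> simp [commutatorElement_def, h12, h23, h34]; ring

def X : UT4 := ⟨1, 0, 0, 0, 0, 0⟩

def Y : UT4 := ⟨0, 0, 0, 1, 0, 1⟩

def e12Hom : UT4 →* Multiplicative ℤ where
  toFun m := .ofAdd m.e12
  map_one' := rfl
  map_mul' _ _ := rfl

/-- The relations satisfied by the powers `Yⁿ`. In all of `UT4`, `[[Y, X], Y]` is a commutator
with `X`; these relations rule that out. -/
def binomial : Subgroup UT4 where
  carrier := {m | m.e34 = m.e23 ∧ 2 * m.e24 = m.e23 * (m.e23 - 1)}
  one_mem' := ⟨rfl, rfl⟩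
  mul_mem' := by
    rintro m n ⟨hm34, hm24⟩ ⟨hn34, hn24⟩
    refine ⟨by simp [hm34, hn34], ?_⟩
    simp only [mul_e24, mul_e23]
    linear_combination hm24 + hn24 + 2 * m.e23 * hn34
  inv_mem' := by
    rintro m ⟨h34, h24⟩
    refine ⟨by simp [h34], ?_⟩
    simp only [inv_e24, inv_e23]
    linear_combination -h24 + 2 * m.e23 * h34

lemma X_mem_binomial : X ∈ binomial := ⟨rfl, rfl⟩

lemma Y_mem_binomial : Y ∈ binomial := ⟨rfl, rfl⟩

lemma X_inv_mul_inv_mul_X_mul (m : UT4) : X⁻¹ * m⁻¹ * X * m = ⟨0, m.e23, m.e24, 0, 0, 0⟩ := by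
  ext <;> simp [X] <;> ring

lemma X_commutator_ne_of_mem_binomial {m : UT4} (hm : m ∈ binomial) :
    X⁻¹ * m⁻¹ * X * m ≠ ⁅⁅Y⁻¹, X⁻¹⁆⁻¹, Y⁻¹⁆ := by
  obtain ⟨-, h24⟩ := hm
  rw [X_inv_mul_inv_mul_X_mul, show ⁅⁅Y⁻¹, X⁻¹⁆⁻¹, Y⁻¹⁆ = ⟨0, 0, -1, 0, 0, 0⟩ by decide]
  intro h
  obtain ⟨-, h23, h24', -⟩ := UT4.mk.inj h
  rw [h23, h24'] at h24
  norm_num at h24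

end UT4

namespace FreeNilpClass3Rank2

def gen (i : Fin 2) : FreeNilpClass3Rank2 := QuotientGroup.mk (FreeGroup.of i)

def lift {K : Type*} [Group K] (hK : (⊤ : Subgroup K).lowerCentralSeries 3 = ⊥)
    (f : FreeGroup (Fin 2) →* K) : FreeNilpClass3Rank2 →* K :=
  QuotientGroup.lift _ f (lowerCentralSeries_le_ker_of_eq_bot f hK)

@[simp] lemma lift_gen {K : Type*} [Group K] (hK : (⊤ : Subgroup K).lowerCentralSeries 3 = ⊥)
    (f : FreeGroup (Fin 2) →* K) (i : Fin 2) : lift hK f (gen i) = f (FreeGroup.of i) := rfl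

noncomputable def toUT4 : FreeNilpClass3Rank2 →* UT4 :=
  lift UT4.lowerCentralSeries_three_eq_bot (FreeGroup.lift ![UT4.X, UT4.Y])

@[simp] lemma toUT4_gen_zero : toUT4 (gen 0) = UT4.X := by simp [toUT4]

@[simp] lemma toUT4_gen_one : toUT4 (gen 1) = UT4.Y := by simp [toUT4]

lemma toUT4_mem_binomial (g : FreeNilpClass3Rank2) : toUT4 g ∈ UT4.binomial := by
  induction g using QuotientGroup.induction_on with | H g => ?_
  refine FreeGroup.range_lift_le ?_ (MonoidHom.mem_range.mpr ⟨g, rfl⟩)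
  rintro _ ⟨i, rfl⟩
  fin_cases i
  exacts [UT4.X_mem_binomial, UT4.Y_mem_binomial]

lemma commutatorElement_gen_mem_center :
    ⁅⁅(gen 1)⁻¹, (gen 0)⁻¹⁆⁻¹, (gen 1)⁻¹⁆ ∈ center FreeNilpClass3Rank2 :=
  QuotientGroup.mk_mem_center_of_mem_lowerCentralSeries (n := 2) <| commutator_mem_commutator
    (inv_mem (commutator_mem_commutator (mem_top _) (mem_top _))) (mem_top _)

lemma gen_zero_zpow_notMem_commutator {n : ℤ} (hn : n ≠ 0) :
    gen 0 ^ n ∉ commutator FreeNilpClass3Rank2 := by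
  intro h
  have h1 := Abelianization.commutator_subset_ker (UT4.e12Hom.comp toUT4) h
  rw [MonoidHom.mem_ker, map_zpow, MonoidHom.comp_apply, toUT4_gen_zero] at h1
  exact hn (by simpa [UT4.e12Hom, UT4.X] using h1)

lemma gen_zero_commutator_ne (w : FreeNilpClass3Rank2) :
    (gen 0)⁻¹ * w⁻¹ * gen 0 * w ≠ ⁅⁅(gen 1)⁻¹, (gen 0)⁻¹⁆⁻¹, (gen 1)⁻¹⁆ := by
  intro h
  refine UT4.X_commutator_ne_of_mem_binomial (toUT4_mem_binomial w) ?_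
  simpa using congrArg toUT4 h

end FreeNilpClass3Rank2

open FreeNilpClass3Rank2 in
theorem free_nilpotent_class_three_not_magnus :
    let x : FreeNilpClass3Rank2 := QuotientGroup.mk (FreeGroup.of 0)
    let y : FreeNilpClass3Rank2 := QuotientGroup.mk (FreeGroup.of 1)
    -- left-normed commutator, paper convention [a,b] = a⁻¹b⁻¹ab
    let v : FreeNilpClass3Rank2 :=
      (y⁻¹ * x⁻¹ * y * x)⁻¹ * y⁻¹ * (y⁻¹ * x⁻¹ * y * x) * y
    v ∈ Subgroup.center FreeNilpClass3Rank2 ∧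
    Subgroup.normalClosure {x} = Subgroup.normalClosure {x * v} ∧
    (∀ n : ℤ, n ≠ 0 → x ^ n ∉ commutator FreeNilpClass3Rank2) ∧
    (∀ w : FreeNilpClass3Rank2, x⁻¹ * w⁻¹ * x * w ≠ v) ∧
    ¬ MagnusProperty FreeNilpClass3Rank2 := by
  intro x y v
  have hv : v = ⁅⁅(gen 1)⁻¹, (gen 0)⁻¹⁆⁻¹, (gen 1)⁻¹⁆ := by
    simp only [v, x, y, gen, commutatorElement_def, inv_inv]
  have hcenter : v ∈ center _ := hv ▸ commutatorElement_gen_mem_center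
  have hncl : normalClosure {x} = normalClosure {x * v} :=
    hv ▸ normalClosure_singleton_eq_mul_commutatorElement commutatorElement_gen_mem_center
  have hpow : ∀ n : ℤ, n ≠ 0 → x ^ n ∉ commutator _ := fun _ ↦ gen_zero_zpow_notMem_commutator
  have hcomm : ∀ w, x⁻¹ * w⁻¹ * x * w ≠ v := hv ▸ gen_zero_commutator_ne
  have hv_comm : v ∈ commutator _ :=
    hv ▸ commutator_mem_commutator (mem_top _) (mem_top _)
  exact ⟨hcenter, hncl, hpow, hcomm,
    not_magnusProperty_of_normalClosure_eq hncl hv_comm (mod_cast hpow 2 two_ne_zero) hcomm⟩
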